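/- arXiv:1909.04481 — 8 statements merged into one kernel-verified Lean document; each statement's English description precedes it below -/
import Mathlib

section
/- Let L : ℝ → ℝ be a non-increasing function (the workload of a machine as a function of its claimed per-unit processing time b = 1/speed), and define the payment P(b) = b·L(b) + ∫_b^∞ L(t) dt (assume the integral converges). Then for every true per-unit time b* > 0 and every claimed value b > 0, the utility satisfies P(b) − b*·L(b) ≤ P(b*) − b*·L(b*); i.e., truth-telling maximizes utility. -/
open MeasureTheory

/-- Truth-telling maximizes utility under the Myerson-style payment
`P b = b * L b + ∫_b^∞ L`. -/
theorem stmt_0 (L : ℝ → ℝ) (hL : Antitone L)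
    (hInt : ∀ b : ℝ, 0 < b → IntegrableOn L (Set.Ioi b))
    (P : ℝ → ℝ) (hP : ∀ b : ℝ, P b = b * L b + ∫ t in Set.Ioi b, L t)
    (bstar b : ℝ) (hbstar : 0 < bstar) (hb : 0 < b) :
    P b - bstar * L b ≤ P bstar - bstar * L bstar := by
  have key : ∀ x y : ℝ, 0 < x → x ≤ y →
      (∫ t in Set.Ioi x, L t) = (∫ t in Set.Ioc x y, L t) + ∫ t in Set.Ioi y, L t := by
    intro x y hx hxy
    have hIoc : IntegrableOn L (Set.Ioc x y) :=
      (hInt x hx).mono_set Set.Ioc_subset_Ioi_self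
    have hIoi : IntegrableOn L (Set.Ioi y) := hInt y (hx.trans_le hxy)
    rw [← MeasureTheory.setIntegral_union (Set.Ioc_disjoint_Ioi le_rfl)
      measurableSet_Ioi hIoc hIoi, Set.Ioc_union_Ioi_eq_Ioi hxy]
  have hIocInt : ∀ x y : ℝ, 0 < x → IntegrableOn L (Set.Ioc x y) := fun x y hx =>
    (hInt x hx).mono_set Set.Ioc_subset_Ioi_self
  have vol : ∀ x y : ℝ, x ≤ y → (volume (Set.Ioc x y)).toReal = y - x := by
    intro x y hxy
    rw [Real.volume_Ioc, ENNReal.toReal_ofReal (by linarith)]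
  rcases le_total b bstar with h | h
  · -- b ≤ bstar: ∫ Ioi b = ∫ Ioc b bstar + ∫ Ioi bstar
    rw [hP, hP, key b bstar hb h]
    have hub : (∫ t in Set.Ioc b bstar, L t) ≤ (bstar - b) * L b := by
      have := MeasureTheory.setIntegral_mono_on (hIocInt b bstar hb)
        (integrableOn_const (by simp [Real.volume_Ioc] ))
        measurableSet_Ioc (fun t ht => hL ht.1.le)
      calc (∫ t in Set.Ioc b bstar, L t) ≤ ∫ _ in Set.Ioc b bstar, L b := this
        _ = (bstar - b) * L b := by rw [setIntegral_const, measureReal_def, vol b bstar h, smul_eq_mul]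
    nlinarith [hL h]
  · rw [hP, hP, key bstar b hbstar h]
    have hlb : (b - bstar) * L b ≤ (∫ t in Set.Ioc bstar b, L t) := by
      have := MeasureTheory.setIntegral_mono_on
        (integrableOn_const (by simp [Real.volume_Ioc]))
        (hIocInt bstar b hbstar)
        measurableSet_Ioc (fun t ht => hL ht.2)
      calc (b - bstar) * L b = ∫ _ in Set.Ioc bstar b, L b := by
            rw [setIntegral_const, measureReal_def, vol bstar b h, smul_eq_mul]
        _ ≤ _ := this
    nlinarith [hL h]
end

section
/- Consider m machines with speeds s_i = 1 + 2^{i−m} for i = 1,…,m, and m online jobs of sizes s_1 < s_2 < ⋯ < s_m arriving in increasing order of size. In any online schedule that is weakly well-behaved at every step (i.e., after each assignment, any machine with strictly higher speed has workload at least that of any slower machine), the following invariant holds after each job is assigned: among machines that have received at least one job, the number of jobs on a machine is strictly increasing in its index (speed). -/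
/-- Invariant for the hardness instance: in any weakly well-behaved online
schedule of jobs of sizes `s 0 < s 1 < ⋯` (with `s i = 1 + 2^(i+1-m)`),
among loaded machines the job counts are strictly increasing in machine index. -/
theorem stmt_3 (m : ℕ) (hm : 0 < m) (s : Fin m → ℝ)
    (hs : ∀ i : Fin m, s i = 1 + 2 ^ (((i : ℕ) : ℤ) + 1 - (m : ℤ)))
    (A : Fin m → Fin m)
    (W : ℕ → Fin m → ℝ)
    (hW : ∀ t i, W t i =
      ∑ j ∈ Finset.univ.filter (fun j : Fin m => (j : ℕ) < t ∧ A j = i), s j)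
    (N : ℕ → Fin m → ℕ)
    (hN : ∀ t i, N t i =
      (Finset.univ.filter (fun j : Fin m => (j : ℕ) < t ∧ A j = i)).card)
    (hwb : ∀ t ≤ m, ∀ i i' : Fin m, i < i' → W t i ≤ W t i') :
    ∀ t ≤ m, ∀ i i' : Fin m, i < i' → 1 ≤ N t i → N t i < N t i' := by
  -- sizes are at least 1
  have hs1 : ∀ j : Fin m, 1 ≤ s j := by
    intro j
    rw [hs]
    have := zpow_pos (by norm_num : (0:ℝ) < 2) (((j : ℕ) : ℤ) + 1 - (m : ℤ))
    linarith
  -- lower bound on workload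
  have hWlow : ∀ t i, (N t i : ℝ) ≤ W t i := by
    intro t i
    rw [hW, hN]
    have := Finset.sum_le_sum (s := Finset.univ.filter
      (fun j : Fin m => (j : ℕ) < t ∧ A j = i)) (f := fun _ => (1:ℝ)) (g := s)
      (fun j _ => hs1 j)
    simpa using this
  -- geometric sum bound for distinct job indices below t
  have hgeo : ∀ (t : ℕ) (S : Finset (Fin m)), (∀ j ∈ S, (j : ℕ) < t) →
      ∑ j ∈ S, (2:ℝ) ^ (j : ℕ) < 2 ^ t := by
    intro t S hS
    have himg : ∑ j ∈ S, (2:ℝ) ^ (j : ℕ) = ∑ k ∈ S.image Fin.val, (2:ℝ) ^ k := by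
      rw [Finset.sum_image]
      intro a _ b _ hab
      exact Fin.val_injective hab
    have hsub : S.image Fin.val ⊆ Finset.range t := by
      intro k hk
      rcases Finset.mem_image.mp hk with ⟨j, hj, rfl⟩
      exact Finset.mem_range.mpr (hS j hj)
    have hle : ∑ k ∈ S.image Fin.val, (2:ℝ) ^ k ≤ ∑ k ∈ Finset.range t, (2:ℝ) ^ k :=
      Finset.sum_le_sum_of_subset_of_nonneg hsub (fun k _ _ => by positivity)
    have hg : ∑ k ∈ Finset.range t, (2:ℝ) ^ k = 2 ^ t - 1 := by
      have := geom_sum_eq (by norm_num : (2:ℝ) ≠ 1) t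
      rw [this]; norm_num
    rw [himg]
    have : (0:ℝ) < 2 ^ t := by positivity
    linarith
  -- upper bound on workload
  have hWup : ∀ t i, W t i < (N t i : ℝ) + 2 ^ ((t : ℤ) + 1 - (m : ℤ)) := by
    intro t i
    rw [hW, hN]
    set S := Finset.univ.filter (fun j : Fin m => (j : ℕ) < t ∧ A j = i) with hSdef
    have hsplit : ∑ j ∈ S, s j
        = (S.card : ℝ) + ∑ j ∈ S, (2:ℝ) ^ (((j : ℕ) : ℤ) + 1 - (m : ℤ)) := by
      rw [Finset.sum_congr rfl (fun j _ => hs j), Finset.sum_add_distrib]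
      simp
    rw [hsplit]
    have hterm : ∀ j : Fin m, (2:ℝ) ^ (((j : ℕ) : ℤ) + 1 - (m : ℤ))
        = (2:ℝ) ^ (j : ℕ) * (2:ℝ) ^ ((1 : ℤ) - (m : ℤ)) := by
      intro j
      rw [← zpow_natCast (2:ℝ) (j : ℕ), ← zpow_add₀ (by norm_num : (2:ℝ) ≠ 0)]
      ring_nf
    have hT : (2:ℝ) ^ ((t : ℤ) + 1 - (m : ℤ))
        = (2:ℝ) ^ t * (2:ℝ) ^ ((1 : ℤ) - (m : ℤ)) := by
      rw [← zpow_natCast (2:ℝ) t, ← zpow_add₀ (by norm_num : (2:ℝ) ≠ 0)]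
      ring_nf
    have hsum : ∑ j ∈ S, (2:ℝ) ^ (((j : ℕ) : ℤ) + 1 - (m : ℤ))
        = (∑ j ∈ S, (2:ℝ) ^ (j : ℕ)) * (2:ℝ) ^ ((1 : ℤ) - (m : ℤ)) := by
      rw [Finset.sum_mul]
      exact Finset.sum_congr rfl (fun j _ => hterm j)
    have hjS : ∀ j ∈ S, (j : ℕ) < t := by
      intro j hj
      exact ((Finset.mem_filter.mp hj).2).1
    have hlt := hgeo t S hjS
    have hpos : (0:ℝ) < (2:ℝ) ^ ((1 : ℤ) - (m : ℤ)) := zpow_pos (by norm_num) _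
    rw [hsum, hT]
    nlinarith
  -- filter recurrence
  have hFsucc : ∀ (t : ℕ) (ht : t < m) (i : Fin m),
      Finset.univ.filter (fun j : Fin m => (j : ℕ) < t + 1 ∧ A j = i)
      = if A ⟨t, ht⟩ = i then
          insert ⟨t, ht⟩ (Finset.univ.filter (fun j : Fin m => (j : ℕ) < t ∧ A j = i))
        else Finset.univ.filter (fun j : Fin m => (j : ℕ) < t ∧ A j = i) := by
    intro t ht i
    by_cases hA : A ⟨t, ht⟩ = i
    · rw [if_pos hA]
      ext j
      simp only [Finset.mem_filter, Finset.mem_univ, true_and, Finset.mem_insert]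
      constructor
      · rintro ⟨hj, hAj⟩
        rcases Nat.lt_succ_iff_lt_or_eq.mp hj with h | h
        · exact Or.inr ⟨h, hAj⟩
        · exact Or.inl (Fin.ext h)
      · rintro (h | ⟨hj, hAj⟩)
        · subst h
          exact ⟨Nat.lt_succ_self t, hA⟩
        · exact ⟨Nat.lt_succ_of_lt hj, hAj⟩
    · rw [if_neg hA]
      ext j
      simp only [Finset.mem_filter, Finset.mem_univ, true_and]
      constructor
      · rintro ⟨hj, hAj⟩
        refine ⟨?_, hAj⟩
        rcases Nat.lt_succ_iff_lt_or_eq.mp hj with h | h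
        · exact h
        · have hje : j = ⟨t, ht⟩ := Fin.ext h
          exact absurd (hje ▸ hAj) hA
      · rintro ⟨hj, hAj⟩
        exact ⟨Nat.lt_succ_of_lt hj, hAj⟩
  have hnotmem : ∀ (t : ℕ) (ht : t < m) (i : Fin m),
      (⟨t, ht⟩ : Fin m) ∉ Finset.univ.filter (fun j : Fin m => (j : ℕ) < t ∧ A j = i) := by
    intro t ht i
    simp
  -- count recurrences
  have hNsucc_pos : ∀ (t : ℕ) (ht : t < m) (i : Fin m), A ⟨t, ht⟩ = i →
      N (t + 1) i = N t i + 1 := by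
    intro t ht i hA
    rw [hN, hN, hFsucc t ht i, if_pos hA, Finset.card_insert_of_notMem (hnotmem t ht i)]
  have hNsucc_neg : ∀ (t : ℕ) (ht : t < m) (i : Fin m), A ⟨t, ht⟩ ≠ i →
      N (t + 1) i = N t i := by
    intro t ht i hA
    rw [hN, hN, hFsucc t ht i, if_neg hA]
  -- workload recurrences
  have hWsucc_pos : ∀ (t : ℕ) (ht : t < m) (i : Fin m), A ⟨t, ht⟩ = i →
      W (t + 1) i = W t i + s ⟨t, ht⟩ := by
    intro t ht i hA
    rw [hW, hW, hFsucc t ht i, if_pos hA, Finset.sum_insert (hnotmem t ht i)]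
    ring
  have hWsucc_neg : ∀ (t : ℕ) (ht : t < m) (i : Fin m), A ⟨t, ht⟩ ≠ i →
      W (t + 1) i = W t i := by
    intro t ht i hA
    rw [hW, hW, hFsucc t ht i, if_neg hA]
  -- main induction
  intro t
  induction t with
  | zero =>
    intro _ i i' _ h1
    have : N 0 i = 0 := by rw [hN]; simp
    omega
  | succ t ih =>
    intro ht i i' hii hN1
    have htm : t < m := lt_of_lt_of_le (Nat.lt_succ_self t) ht
    have htm' : t ≤ m := le_of_lt htm
    have hne : i ≠ i' := ne_of_lt hii
    by_cases hAi : A ⟨t, htm⟩ = i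
    · -- job t placed on the slower machine i
      have hAi' : A ⟨t, htm⟩ ≠ i' := by rw [hAi]; exact hne
      rw [hNsucc_pos t htm i hAi, hNsucc_neg t htm i' hAi']
      by_contra hcon
      push_neg at hcon
      have hcast : (N t i' : ℝ) ≤ (N t i : ℝ) + 1 := by exact_mod_cast hcon
      have hw1 : W (t + 1) i = W t i + s ⟨t, htm⟩ := hWsucc_pos t htm i hAi
      have hw2 : W (t + 1) i' = W t i' := hWsucc_neg t htm i' hAi'
      have hwb1 : W (t + 1) i ≤ W (t + 1) i' := hwb (t + 1) ht i i' hii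
      have hst : s ⟨t, htm⟩ = 1 + 2 ^ ((t : ℤ) + 1 - (m : ℤ)) := hs ⟨t, htm⟩
      have h3 := hWup t i'
      have h4 := hWlow t i
      rw [hst] at hw1
      linarith
    · by_cases hAi' : A ⟨t, htm⟩ = i'
      · rw [hNsucc_neg t htm i hAi, hNsucc_pos t htm i' hAi']
        rw [hNsucc_neg t htm i hAi] at hN1
        have := ih htm' i i' hii hN1
        omega
      · rw [hNsucc_neg t htm i hAi, hNsucc_neg t htm i' hAi']
        rw [hNsucc_neg t htm i hAi] at hN1
        exact ih htm' i i' hii hN1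
end

section
/- There exists a family of instances (one for each m) of the online load balancing problem on m related machines such that any deterministic online algorithm producing a weakly well-behaved schedule at every step has makespan at least c·√m times the optimal offline makespan, for some universal constant c > 0. Concretely, with speeds s_i = 1 + 2^{i−m} and jobs of sizes s_1,…,s_m arriving in increasing order, the optimal makespan is at most 1 while any weakly well-behaved online schedule has makespan Ω(√m). -/
/-!
Write the job sizes as `1 + ε j`, where `ε j = 2^(j+1-m)` is superincreasing: every sum of
earlier terms is smaller than `ε j`. If machine `i` receives its last job `j` and `i < i'`, then
right after `j` is placed machine `i` carries its `Nᵢ` jobs and at least `ε j`, while machine `i'`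
carries at most `Nᵢ'` jobs and a sum of earlier `ε`'s, which is `< ε j`; well-behavedness forces
`Nᵢ < Nᵢ'`. So the nonzero job counts strictly increase with the speed, the counts of the used
machines are distinct numbers in `[1, L]` with `L` the count of the fastest machine, and
`m = ∑ Nᵢ ≤ L²`. The fastest machine has speed `2`, hence makespan at least `L / 2 ≥ √m / 2`,
whereas placing job `i` on machine `i` has makespan `1`.
-/

open Finset

section Counting

variable {ι : Type*} [Fintype ι]

theorem sum_le_sq_of_injOn_support (N : ι → ℕ) {L : ℕ} (hle : ∀ i, N i ≤ L)
    (hinj : Set.InjOn N {i | N i ≠ 0}) : ∑ i, N i ≤ L ^ 2 := by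
  classical
  set P := univ.filter (fun i => N i ≠ 0)
  have hP : #P ≤ L := by
    simpa using card_le_card_of_injOn N (t := Icc 1 L)
      (fun i hi => by simpa [P, Nat.one_le_iff_ne_zero, hle i] using hi)
      (by simpa [P] using hinj)
  calc ∑ i, N i = ∑ i ∈ P, N i := (sum_filter_ne_zero _).symm
    _ ≤ #P * L := by simpa using sum_le_card_nsmul P N L fun i _ => hle i
    _ ≤ L ^ 2 := by rw [sq]; exact Nat.mul_le_mul_right _ hP

theorem sum_le_sq_of_lt_of_ne_zero [LinearOrder ι] (N : ι → ℕ) {top : ι} (htop : ∀ i, i ≤ top)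
    (hN : ∀ i i', i < i' → N i ≠ 0 → N i < N i') : ∑ i, N i ≤ N top ^ 2 := by
  refine sum_le_sq_of_injOn_support N (fun i => ?_) fun i hi i' hi' hii' => ?_
  · rcases (htop i).lt_or_eq with h | rfl
    · by_cases h0 : N i = 0
      · omega
      · exact (hN i top h h0).le
    · rfl
  · rcases lt_trichotomy i i' with h | h | h
    · exact absurd hii' (hN i i' h hi).ne
    · exact h
    · exact absurd hii' (hN i' i h hi').ne'

end Counting

def Superincreasing {α : Type*} [Preorder α] (ε : α → ℝ) : Prop :=
  ∀ (T : Finset α) (j : α), (∀ k ∈ T, k < j) → ∑ k ∈ T, ε k < ε j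

theorem Superincreasing.pos {α : Type*} [Preorder α] {ε : α → ℝ} (hε : Superincreasing ε)
    (j : α) : 0 < ε j := by
  simpa using hε ∅ j (by simp)

theorem superincreasing_mul_two_pow {n : ℕ} {c : ℝ} (hc : 0 < c) :
    Superincreasing fun k : Fin n => c * 2 ^ (k : ℕ) := by
  intro T j hT
  rw [← mul_sum]
  refine mul_lt_mul_of_pos_left ?_ hc
  have := Nat.geomSum_lt le_rfl (s := T.map Fin.valEmbedding) (n := j) (by simpa using hT)
  rw [sum_map] at this
  exact_mod_cast this

section Schedules

variable {ι : Type*} {n : ℕ}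

def prefixLoad [DecidableEq ι] (p : Fin n → ℝ) (A : Fin n → ι) (t : ℕ) (i : ι) : ℝ :=
  ∑ j ∈ univ.filter (fun j : Fin n => (j : ℕ) < t ∧ A j = i), p j

def WeaklyWellBehaved [LinearOrder ι] (p : Fin n → ℝ) (A : Fin n → ι) : Prop :=
  ∀ t ≤ n, ∀ i i' : ι, i < i' → prefixLoad p A t i ≤ prefixLoad p A t i'

theorem card_fiber_lt_of_weaklyWellBehaved [LinearOrder ι] {ε : Fin n → ℝ}
    (hε : Superincreasing ε) {A : Fin n → ι} (hA : WeaklyWellBehaved (fun j => 1 + ε j) A)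
    {i i' : ι} (hii' : i < i') (hi : (univ.filter (A · = i)).Nonempty) :
    #(univ.filter (A · = i)) < #(univ.filter (A · = i')) := by
  set S := univ.filter (A · = i)
  set S' := univ.filter (A · = i')
  set j := S.max' hi
  have hAj : A j = i := (mem_filter.1 (S.max'_mem hi)).2
  have hprefix := hA (j + 1) j.isLt i i' hii'
  set T := univ.filter (fun k : Fin n => (k : ℕ) < j + 1 ∧ A k = i')
  have hS : univ.filter (fun k : Fin n => (k : ℕ) < j + 1 ∧ A k = i) = S := by
    ext k
    simp only [S, mem_filter, mem_univ, true_and, and_iff_right_iff_imp]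
    intro hk
    have := S.le_max' k (by simpa [S] using hk)
    rw [Fin.le_def] at this
    omega
  have hT : ∀ k ∈ T, k < j := by
    intro k hk
    simp only [T, mem_filter, mem_univ, true_and] at hk
    have hkj : k ≠ j := by rintro rfl; exact hii'.ne (hAj.symm.trans hk.2)
    exact lt_of_le_of_ne (Fin.le_def.2 (by omega)) hkj
  have hTS' : #T ≤ #S' := card_le_card fun k hk => by simp_all [T, S']
  have lower : #S + ε j ≤ ∑ k ∈ S, (1 + ε k) := by
    rw [sum_add_distrib]
    simpa using single_le_sum (fun k _ => (hε.pos k).le) (S.max'_mem hi)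
  have upper : ∑ k ∈ T, (1 + ε k) < #S' + ε j := by
    rw [sum_add_distrib]
    have := hε T j hT
    simp only [sum_const, nsmul_eq_mul, mul_one]
    have : (#T : ℝ) ≤ #S' := by exact_mod_cast hTS'
    linarith
  unfold prefixLoad at hprefix
  rw [hS] at hprefix
  exact_mod_cast (show (#S : ℝ) < #S' by linarith)

end Schedules

/-- Hardness of well-behaved online load balancing: there is a universal
`c > 0` and, for each `m`, an instance (speeds `s i = 1 + 2^(i+1-m)`, jobs of
sizes `s 0, …, s (m-1)` arriving in increasing order) whose optimal makespan
is at most `1`, while every online schedule that is weakly well-behaved after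
every prefix has makespan at least `c·√m`. -/
theorem stmt_6 :
    ∃ c : ℝ, 0 < c ∧ ∀ m : ℕ, 1 ≤ m →
      ∀ s : Fin m → ℝ,
        (∀ i : Fin m, s i = 1 + 2 ^ (((i : ℕ) : ℤ) + 1 - (m : ℤ))) →
        ((∃ B : Fin m → Fin m, ∀ i : Fin m,
            (∑ j ∈ Finset.univ.filter (fun j : Fin m => B j = i), s j) / s i ≤ 1) ∧
         ∀ A : Fin m → Fin m,
           (∀ t ≤ m, ∀ i i' : Fin m, i < i' →
              (∑ j ∈ Finset.univ.filter (fun j : Fin m => (j : ℕ) < t ∧ A j = i), s j)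
                ≤ ∑ j ∈ Finset.univ.filter (fun j : Fin m => (j : ℕ) < t ∧ A j = i'), s j) →
           ∃ i : Fin m,
             c * Real.sqrt m ≤
               (∑ j ∈ Finset.univ.filter (fun j : Fin m => A j = i), s j) / s i) := by
  refine ⟨1 / 2, by norm_num, fun m hm s hs => ?_⟩
  set ε : Fin m → ℝ := fun k => 2 ^ (((k : ℕ) : ℤ) + 1 - (m : ℤ))
  obtain rfl : s = fun k => 1 + ε k := funext hs
  refine ⟨⟨id, fun i => ?_⟩, fun A hA => ?_⟩
  · have : 0 < 1 + ε i := by positivity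
    simp [filter_eq', this.ne']
  have hε : Superincreasing ε := by
    convert superincreasing_mul_two_pow (n := m) (zpow_pos two_pos (1 - m : ℤ)) using 2 with k
    rw [← zpow_natCast, ← zpow_add₀ two_ne_zero]
    simp only [ε]
    ring_nf
  obtain ⟨k, rfl⟩ : ∃ k, m = k + 1 := ⟨m - 1, by omega⟩
  set N : Fin (k + 1) → ℕ := fun i => #(univ.filter (A · = i))
  have hsq : k + 1 ≤ N (Fin.last k) ^ 2 := by
    simpa [N, ← card_eq_sum_card_fiberwise] using
      sum_le_sq_of_lt_of_ne_zero N Fin.le_last fun i i' hii' hi =>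
        card_fiber_lt_of_weaklyWellBehaved hε hA hii' (card_pos.1 (Nat.pos_of_ne_zero hi))
  have hload : (N (Fin.last k) : ℝ) ≤ ∑ j ∈ univ.filter (A · = Fin.last k), (1 + ε j) := by
    simpa using card_nsmul_le_sum _ _ 1 fun j _ => (le_add_of_nonneg_right (hε.pos j).le)
  have hlast : 1 + ε (Fin.last k) = 2 := by
    simp only [ε, Fin.val_last]
    push_cast
    norm_num
  refine ⟨Fin.last k, ?_⟩
  beta_reduce
  rw [hlast]
  have : Real.sqrt (k + 1 : ℕ) ≤ N (Fin.last k) :=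
    Real.sqrt_le_iff.2 ⟨by positivity, by exact_mod_cast hsq⟩
  linarith
end

section
/- In mechanism M_PPR, if the schedule is well-behaved before a job j of size p_j arrives, and job j selfishly chooses the machine i minimizing its cost C_i(j) + p_j/s_i + ρ_i(j), then after assigning j to machine i, the schedule remains well-behaved: in particular C_i(j) + p_j/s_i ≤ C_{i+1}(j). -/
/-- Preservation of well-behavior in `M_PPR`: if job `j` (of size `p`) chooses
machine `i` minimizing its cost `C_i + p/s_i + ρ_i` (in particular its cost on
`i` is at most its cost on `i+1`), then `C i + p / s i ≤ C (i+1)`. -/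
theorem stmt_10 (m : ℕ) (s C π ρ : ℕ → ℝ)
    (hspos : ∀ l, l < m → 0 < s l)
    (hsinc : ∀ l, l + 1 < m → s l < s (l + 1))
    (hwb : ∀ l, l + 1 < m → C l ≤ C (l + 1))
    (hπ : ∀ l, l + 1 < m → π l = s l / s (l + 1) * (C (l + 1) - C l))
    (hρ : ∀ l, l + 1 < m → ρ l = π l + ρ (l + 1))
    (p : ℝ) (hp : 0 ≤ p)
    (i : ℕ) (hi : i + 1 < m)
    (hmin : C i + p / s i + ρ i ≤ C (i + 1) + p / s (i + 1) + ρ (i + 1)) :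
    C i + p / s i ≤ C (i + 1) := by
  have ha : 0 < s i := hspos i (by omega)
  have hb : 0 < s (i + 1) := hspos (i + 1) hi
  have hab : s i < s (i + 1) := hsinc i hi
  rw [hρ i hi, hπ i hi] at hmin
  have hr1 : s i / s (i + 1) < 1 := (div_lt_one hb).mpr hab
  have hr0 : 0 < s i / s (i + 1) := div_pos ha hb
  have key : s i / s (i + 1) * (p / s i) = p / s (i + 1) := by
    field_simp
  nlinarith [hmin, hr1, hr0, key]
end

section
/- With the dynamic prices ρ_i(j) = ∑_{l≥i} π_l where π_l = (s_l/s_{l+1})·(C_{l+1}(j) − C_l(j)) and s_{l+1} ≥ 2·s_l for all l, the price difference between any slower machine i' and any faster machine i ≥ i' satisfies ρ_{i'}(j) − ρ_i(j) ≤ (1/2)·(C_i(j) − C_{i'}(j)). -/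
/-! Since `s l / s (l+1) ≤ 1/2`, every price increment `π l` is at most half the makespan
increment `C (l+1) - C l`, and the price difference `ρ i' - ρ i = ∑_{i' ≤ l < i} π l`
telescopes to at most `(C i - C i') / 2`. -/

open Finset

lemma div_mul_le_half_mul {K : Type*} [Field K] [LinearOrder K] [IsStrictOrderedRing K] {a b d : K}
    (hb : 0 < b) (hab : 2 * a ≤ b) (hd : 0 ≤ d) :
    a / b * d ≤ 1 / 2 * d := by
  have hratio : a / b ≤ 1 / 2 := by
    rw [div_le_iff₀ hb]
    linarith
  exact mul_le_mul_of_nonneg_right hratio hd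

lemma Finset.sum_Ico_sub_sum_Ico_of_le {G : Type*} [AddCommGroup G] (f : ℕ → G) {a b n : ℕ}
    (hab : a ≤ b) (hbn : b ≤ n) :
    ∑ t ∈ Ico a n, f t - ∑ t ∈ Ico b n, f t = ∑ t ∈ Ico a b, f t := by
  rw [← sum_Ico_consecutive f hab hbn, add_sub_cancel_right]

/-- Telescoping price bound: with `π l = (s l / s (l+1))·(C (l+1) − C l)`,
`s (l+1) ≥ 2·s l` and monotone makespans, for any slower machine `i' ≤ i`,
`ρ i' − ρ i ≤ (1/2)·(C i − C i')`. -/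
theorem stmt_11 (m : ℕ) (s C π ρ : ℕ → ℝ)
    (hspos : ∀ l, l < m → 0 < s l)
    (hs2 : ∀ l, l + 1 < m → 2 * s l ≤ s (l + 1))
    (hC : ∀ l, l + 1 < m → C l ≤ C (l + 1))
    (hπ : ∀ l, l + 1 < m → π l = s l / s (l + 1) * (C (l + 1) - C l))
    (hρ : ∀ l, l < m → ρ l = ∑ t ∈ Finset.Ico l (m - 1), π t)
    (i' i : ℕ) (h1 : i' ≤ i) (h2 : i < m) :
    ρ i' - ρ i ≤ 1 / 2 * (C i - C i') := by
  have hπ_le : ∀ t ∈ Ico i' i, π t ≤ 1 / 2 * (C (t + 1) - C t) := by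
    intro t ht
    have htm : t + 1 < m := by grind
    rw [hπ t htm]
    exact div_mul_le_half_mul (hspos _ htm) (hs2 t htm) (sub_nonneg.2 (hC t htm))
  calc ρ i' - ρ i = ∑ t ∈ Ico i' i, π t := by
        rw [hρ i' (h1.trans_lt h2), hρ i h2]
        exact sum_Ico_sub_sum_Ico_of_le π h1 (by omega)
    _ ≤ ∑ t ∈ Ico i' i, 1 / 2 * (C (t + 1) - C t) := sum_le_sum hπ_le
    _ = 1 / 2 * (C i - C i') := by rw [← mul_sum, sum_Ico_sub C h1]
end

section
/- Suppose job j of size p_j with p_j/s_{i'} ≤ OPT₂ is assigned by M_PPR to a machine i with s_i ≥ 2·s_{i'}, while a slower machine i' satisfies C_i(j) − C_{i'}(j) ≥ 2·OPT₂ − p_j/s_i. Then the cost of job j on machine i' is at most its cost on machine i, i.e., C_{i'}(j) + p_j/s_{i'} + ρ_{i'}(j) ≤ C_i(j) + (1/2)·(p_j/s_i) + ρ_i(j) ≤ C_i(j) + p_j/s_i + ρ_i(j). -/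
/-- Half the makespan gap `C - C'` pays for the price advantage `ρ' - ρ` of the slower machine,
and the other half, being at least `OPT - t / 2 ≥ t' - t / 2`, pays for its longer processing time. -/
theorem cost_le_of_makespan_gap {C C' ρ ρ' t t' OPT : ℝ} (ht' : t' ≤ OPT)
    (hgap : 2 * OPT - t ≤ C - C') (hprice : ρ' - ρ ≤ 1 / 2 * (C - C')) :
    C' + t' + ρ' ≤ C + 1 / 2 * t + ρ := by
  linarith

/-- Core algebraic step of the `difference-of-C` lemma: under the stated
conditions, the cost of job `j` on the slower machine `i'` is at most its cost
on machine `i`. -/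
theorem stmt_12 (si si' p OPT2 Ci Ci' ρi ρi' : ℝ)
    (hsi' : 0 < si') (hsi : 2 * si' ≤ si) (hp : 0 ≤ p)
    (hproc : p / si' ≤ OPT2)
    (hgap : 2 * OPT2 - p / si ≤ Ci - Ci')
    (hprice : ρi' - ρi ≤ 1 / 2 * (Ci - Ci')) :
    Ci' + p / si' + ρi' ≤ Ci + 1 / 2 * (p / si) + ρi ∧
    Ci + 1 / 2 * (p / si) + ρi ≤ Ci + p / si + ρi := by
  refine ⟨cost_le_of_makespan_gap hproc hgap hprice, ?_⟩
  have hload : 0 ≤ p / si := div_nonneg hp (by linarith)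
  linarith
end

section
/- Let speeds be powers of 2 with maximum 2^K, and suppose every machine of speed at least 2^{K−⌈log₂ m⌉} has (final) makespan at least ALG − (4⌈log₂ m⌉ + 1)·OPT₂, where ALG is the maximum makespan. Then ALG ≤ (4⌈log₂ m⌉ + 3)·OPT₂; i.e., ALG = O(log m)·OPT₂. -/
/-- If every machine of speed at least `2^(K − ⌈log₂ m⌉)` has final makespan at
least `ALG − (4⌈log₂ m⌉ + 1)·OPT₂`, then `ALG ≤ (4⌈log₂ m⌉ + 3)·OPT₂`, i.e.
`ALG = O(log m)·OPT₂` (here there are `m+1` machines). -/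
theorem stmt_14 (m n : ℕ) (K : ℤ)
    (s : Fin (m + 1) → ℝ) (e : Fin (m + 1) → ℤ) (hse : ∀ i, s i = 2 ^ e i)
    (hK : ∀ i, s i ≤ 2 ^ K) (htop : ∃ i, s i = 2 ^ K)
    (p : Fin n → ℝ) (hp : ∀ j, 0 < p j)
    (A : Fin n → Fin (m + 1))
    (C : Fin (m + 1) → ℝ)
    (hC : ∀ i, C i = (∑ j ∈ Finset.univ.filter (fun j => A j = i), p j) / s i)
    (ALG OPT2 : ℝ)
    (hALG : ∃ i, C i = ALG ∧ ∀ i', C i' ≤ ALG)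
    (hOPT2 : OPT2 = ⨅ B : Fin n → Fin (m + 1),
      Finset.univ.sup' Finset.univ_nonempty
        (fun i => (∑ j ∈ Finset.univ.filter (fun j => B j = i), p j) / s i))
    (hfast : ∀ i, (2 : ℝ) ^ (K - (Nat.clog 2 (m + 1) : ℤ)) ≤ s i →
      ALG - (4 * (Nat.clog 2 (m + 1) : ℝ) + 1) * OPT2 ≤ C i) :
    ALG ≤ (4 * (Nat.clog 2 (m + 1) : ℝ) + 3) * OPT2 := by
  by_contra hcon
  push_neg at hcon
  set L : ℕ := Nat.clog 2 (m + 1) with hL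
  have hs_pos : ∀ i, 0 < s i := fun i => by rw [hse i]; positivity
  classical
  set F : Finset (Fin (m + 1)) :=
    Finset.univ.filter (fun i => (2 : ℝ) ^ (K - (L : ℤ)) ≤ s i) with hF
  obtain ⟨t, ht⟩ := htop
  have htF : t ∈ F := by
    simp only [hF, Finset.mem_filter, Finset.mem_univ, true_and, ht]
    exact zpow_le_zpow_right₀ one_le_two (by omega)
  set SF : ℝ := ∑ i ∈ F, s i with hSF
  have hSF_ge : (2 : ℝ) ^ K ≤ SF := by
    rw [← ht]
    exact Finset.single_le_sum (fun i _ => (hs_pos i).le) htF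
  have hSF_pos : 0 < SF := lt_of_lt_of_le (by positivity) hSF_ge
  set T : ℝ := ∑ j, p j with hT
  have hs_sum_pos : 0 < ∑ i, s i := Finset.sum_pos (fun i _ => hs_pos i) Finset.univ_nonempty
  -- T ≤ OPT2 * ∑ s
  have hTle : T ≤ OPT2 * ∑ i, s i := by
    rw [← div_le_iff₀ hs_sum_pos, hOPT2]
    apply le_ciInf
    intro B
    rw [div_le_iff₀ hs_sum_pos]
    calc T = ∑ i, ∑ j ∈ Finset.univ.filter (fun j => B j = i), p j := by
            rw [hT, Finset.sum_fiberwise]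
      _ ≤ ∑ i, (Finset.univ.sup' Finset.univ_nonempty
            (fun i => (∑ j ∈ Finset.univ.filter (fun j => B j = i), p j) / s i)) * s i := by
          apply Finset.sum_le_sum
          intro i _
          rw [← div_le_iff₀ (hs_pos i)]
          exact Finset.le_sup'
            (fun i => (∑ j ∈ Finset.univ.filter (fun j => B j = i), p j) / s i)
            (Finset.mem_univ i)
      _ = _ := by rw [← Finset.mul_sum]
  -- OPT2 ≥ 0
  have hOPT2_nonneg : 0 ≤ OPT2 := by
    rw [hOPT2]
    apply le_ciInf
    intro B
    refine le_trans ?_ (Finset.le_sup' _ (Finset.mem_univ t))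
    have : 0 ≤ ∑ j ∈ Finset.univ.filter (fun j => B j = t), p j :=
      Finset.sum_nonneg (fun j _ => (hp j).le)
    exact div_nonneg this (hs_pos t).le
  -- slow machines bound
  have hslow : ∀ i, i ∉ F → s i ≤ (2 : ℝ) ^ (K - (L : ℤ) - 1) := by
    intro i hi
    simp only [hF, Finset.mem_filter, Finset.mem_univ, true_and, not_le] at hi
    rw [hse i] at hi ⊢
    have : e i < K - (L : ℤ) := by
      by_contra h
      push_neg at h
      exact absurd (zpow_le_zpow_right₀ one_le_two h) (not_le.mpr hi)
    exact zpow_le_zpow_right₀ one_le_two (by omega)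
  have hmL : ((m : ℝ) + 1) ≤ 2 ^ (L : ℤ) := by
    have h := Nat.le_pow_clog one_lt_two (m + 1)
    have : ((m + 1 : ℕ) : ℝ) ≤ ((2 ^ L : ℕ) : ℝ) := Nat.cast_le.mpr h
    push_cast at this
    rw [zpow_natCast]
    linarith
  -- total speed ≤ 2 SF
  have hsum_le : ∑ i, s i ≤ 2 * SF := by
    have hsplit : ∑ i, s i = SF + ∑ i ∈ Fᶜ, s i := by
      rw [hSF, ← Finset.sum_add_sum_compl F s]
    have hcompl : ∑ i ∈ Fᶜ, s i ≤ (2 : ℝ) ^ K := by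
      calc ∑ i ∈ Fᶜ, s i ≤ ∑ _i ∈ Fᶜ, (2 : ℝ) ^ (K - (L : ℤ) - 1) :=
            Finset.sum_le_sum (fun i hi => hslow i (Finset.mem_compl.mp hi))
        _ = (Fᶜ.card : ℝ) * 2 ^ (K - (L : ℤ) - 1) := by
            rw [Finset.sum_const, nsmul_eq_mul]
        _ ≤ ((m : ℝ) + 1) * 2 ^ (K - (L : ℤ) - 1) := by
            apply mul_le_mul_of_nonneg_right _ (by positivity)
            have := Finset.card_le_univ Fᶜ
            have h2 : (Fᶜ.card : ℝ) ≤ ((Finset.univ : Finset (Fin (m+1))).card : ℝ) :=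
              Nat.cast_le.mpr this
            simpa using h2
        _ ≤ 2 ^ (L : ℤ) * 2 ^ (K - (L : ℤ) - 1) := by
            apply mul_le_mul_of_nonneg_right hmL (by positivity)
        _ = 2 ^ (K - 1) := by rw [← zpow_add₀ (two_ne_zero)]; ring_nf
        _ ≤ 2 ^ K := zpow_le_zpow_right₀ one_le_two (by omega)
    linarith [hSF_ge]
  -- lower bound T > 2 OPT2 SF
  have hfactor : 2 * OPT2 < ALG - (4 * (L : ℝ) + 1) * OPT2 := by linarith
  have hTge : (ALG - (4 * (L : ℝ) + 1) * OPT2) * SF ≤ T := by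
    calc (ALG - (4 * (L : ℝ) + 1) * OPT2) * SF = ∑ i ∈ F, (ALG - (4 * (L : ℝ) + 1) * OPT2) * s i := by
          rw [← Finset.mul_sum]
      _ ≤ ∑ i ∈ F, C i * s i := by
          apply Finset.sum_le_sum
          intro i hi
          simp only [hF, Finset.mem_filter, Finset.mem_univ, true_and] at hi
          exact mul_le_mul_of_nonneg_right (hfast i hi) (hs_pos i).le
      _ = ∑ i ∈ F, ∑ j ∈ Finset.univ.filter (fun j => A j = i), p j := by
          apply Finset.sum_congr rfl
          intro i _
          rw [hC i, div_mul_cancel₀ _ (hs_pos i).ne']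
      _ ≤ ∑ i, ∑ j ∈ Finset.univ.filter (fun j => A j = i), p j := by
          apply Finset.sum_le_sum_of_subset_of_nonneg (Finset.subset_univ F)
          intro i _ _
          exact Finset.sum_nonneg (fun j _ => (hp j).le)
      _ = T := by rw [hT, Finset.sum_fiberwise]
  have : T < T := by
    calc T ≤ OPT2 * ∑ i, s i := hTle
      _ ≤ OPT2 * (2 * SF) := mul_le_mul_of_nonneg_left hsum_le hOPT2_nonneg
      _ = 2 * OPT2 * SF := by ring
      _ < (ALG - (4 * (L : ℝ) + 1) * OPT2) * SF := by
          exact mul_lt_mul_of_pos_right hfactor hSF_pos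
      _ ≤ T := hTge
  exact lt_irrefl T this
end

section
/- Let L, R, L', R', P be nonnegative reals with P ≤ R − L, L + 4^i·R = 4·L' + 4^i·R' for some integer i ≥ 1, and L' + P/4 ≥ R'. Then 4·L' ≥ L + P. -/
/-! Write `t = 4^i ≥ 4`. Conservation of work gives `t·(R - R') = 4L' - L`, and the rejection
condition bounds `R'` by `L' + P/4`; together with `R ≥ L + P` this yields
`t·(L + P) ≤ 4L' - L + t·(L' + P/4)`. Rearranged, `(4 + t)·(4L' - (L + P))` is at least
`3t·L + (2t - 4)·P ≥ 0`, which is where `t ≥ 2` enters. -/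

theorem le_four_mul_of_work_eq {L R L' R' P t : ℝ} (ht : 2 ≤ t) (hL : 0 ≤ L) (hP : 0 ≤ P)
    (h1 : P ≤ R - L) (h2 : L + t * R = 4 * L' + t * R') (h3 : R' ≤ L' + P / 4) :
    L + P ≤ 4 * L' := by
  have ht₀ : 0 ≤ t := by linarith
  have hwork : t * (L + P) ≤ 4 * L' - L + t * (L' + P / 4) :=
    calc t * (L + P) ≤ t * R := by gcongr; linarith
      _ = 4 * L' - L + t * R' := by linarith
      _ ≤ 4 * L' - L + t * (L' + P / 4) := by gcongr
  have hslack : 0 ≤ 3 * t * L + (2 * t - 4) * P := by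
    linarith [mul_nonneg ht₀ hL, mul_nonneg (sub_nonneg.2 ht) hP]
  have hscaled : 0 ≤ (4 + t) * (4 * L' - (L + P)) := by linarith
  exact sub_nonneg.mp (nonneg_of_mul_nonneg_right hscaled (by linarith))

theorem stmt_18_general (L R L' R' P : ℝ) (i : ℤ)
    (hL : 0 ≤ L) (hP : 0 ≤ P)
    (hi : 1 ≤ i) (h1 : P ≤ R - L)
    (h2 : L + 4 ^ i * R = 4 * L' + 4 ^ i * R')
    (h3 : R' ≤ L' + P / 4) :
    L + P ≤ 4 * L' := by
  have ht : (4 : ℝ) ≤ 4 ^ i :=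
    (zpow_one (4 : ℝ)).symm.le.trans (zpow_le_zpow_right₀ (by norm_num) hi)
  exact le_four_mul_of_work_eq (by linarith) hL hP h1 h2 h3

/-- Key inequality in the two-machine monotonicity proof: if `P ≤ R − L`,
`L + 4^i·R = 4·L' + 4^i·R'` (`i ≥ 1`) and `L' + P/4 ≥ R'`, then
`4·L' ≥ L + P`. -/
theorem stmt_18 (L R L' R' P : ℝ) (i : ℤ)
    (hL : 0 ≤ L) (hR : 0 ≤ R) (hL' : 0 ≤ L') (hR' : 0 ≤ R') (hP : 0 ≤ P)
    (hi : 1 ≤ i) (h1 : P ≤ R - L)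
    (h2 : L + 4 ^ i * R = 4 * L' + 4 ^ i * R')
    (h3 : R' ≤ L' + P / 4) :
    L + P ≤ 4 * L' :=
  stmt_18_general L R L' R' P i hL hP hi h1 h2 h3
end
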